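/- Let G = (V,E) be a finite graph with n(G) vertices and covered components polynomial C(G) = C(G,x,y,z). For nonnegative integers n', m', k', let g(G,n',m',k') be the number of edge subsets A ⊆ E whose edge-induced subgraph (whose vertex set is the set of vertices incident to an edge of A and whose edge set is A) has exactly n' vertices, m' edges and k' connected components. Then g(G,n',m',k') = [x^{n(G)−n'+k'} y^{m'} z^{k'}]C(G). -/

import Mathlib

/-! Every component of the spanning subgraph `⟨A⟩` is either a covered component, i.e. a
component of the edge-induced subgraph, or an isolated vertex outside its vertex set. Hence
`k(⟨A⟩) = k' + (n(G) - n')` and `c(⟨A⟩) = k'`, so the monomial that `A` contributes to `C(G)` is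
`x^{n(G)-n'+k'} y^{m'} z^{k'}`. -/

open MvPolynomial Finset
open scoped Classical

noncomputable section

variable {V : Type}

/-- The (finite) edge set of a simple graph on a finite vertex type, as a `Finset`. -/
def edgeFinset' [Fintype V] (G : SimpleGraph V) : Finset (Sym2 V) :=
  (Set.toFinite G.edgeSet).toFinset

/-- `k(G)`: the number of connected components of `G`. -/
def kG (G : SimpleGraph V) : ℕ := Nat.card G.ConnectedComponent

/-- `c(G)`: the number of covered components of `G`, i.e. connected components
containing at least one edge. -/
def cG (G : SimpleGraph V) : ℕ :=
  Nat.card {c : G.ConnectedComponent // ∃ v w, G.Adj v w ∧ G.connectedComponentMk v = c}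

/-- The covered components polynomial
`C(G,x,y,z) = ∑_{A ⊆ E} x^{k(⟨A⟩)} y^{|A|} z^{c(⟨A⟩)}` of a finite simple graph, where
`⟨A⟩` denotes the spanning subgraph with edge set `A`, and `x = X 0`, `y = X 1`,
`z = X 2`. -/
def ccp [Fintype V] (G : SimpleGraph V) : MvPolynomial (Fin 3) ℤ :=
  ∑ A ∈ (edgeFinset' G).powerset,
    X 0 ^ kG (SimpleGraph.fromEdgeSet (A : Set (Sym2 V))) * X 1 ^ A.card *
      X 2 ^ cG (SimpleGraph.fromEdgeSet (A : Set (Sym2 V)))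

/-- `[x^i y^j z^k] P`: the coefficient of the monomial `x^i y^j z^k`. -/
def coeff3 (P : MvPolynomial (Fin 3) ℤ) (i j k : ℕ) : ℤ :=
  MvPolynomial.coeff (Finsupp.single 0 i + Finsupp.single 1 j + Finsupp.single 2 k) P

/-- The vertex set of the subgraph edge-induced by `A`: all vertices incident to an edge
of `A`. -/
def vsupp [Fintype V] (A : Finset (Sym2 V)) : Finset V :=
  Finset.univ.filter (fun v => ∃ s ∈ A, v ∈ s)

/-- The number of connected components of the subgraph edge-induced by `A`, i.e. the
number of connected components of the spanning subgraph `⟨A⟩` containing a vertex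
incident to an edge of `A`. -/
def nCompInduced [Fintype V] (A : Finset (Sym2 V)) : ℕ :=
  Nat.card {c : (SimpleGraph.fromEdgeSet (A : Set (Sym2 V))).ConnectedComponent //
    ∃ v, (∃ s ∈ A, v ∈ s) ∧
      (SimpleGraph.fromEdgeSet (A : Set (Sym2 V))).connectedComponentMk v = c}

theorem SimpleGraph.IsIsolated.eq_of_reachable {H : SimpleGraph V} {u v : V}
    (hu : H.IsIsolated u) (h : H.Reachable u v) : u = v := by
  by_contra huv
  exact H.notMem_support_iff_isIsolated.2 hu (SimpleGraph.mem_support_of_reachable huv h)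

def SimpleGraph.isIsolatedEquivUncovered (H : SimpleGraph V) : {v // H.IsIsolated v} ≃
    {c : H.ConnectedComponent // ¬ ∃ v w, H.Adj v w ∧ H.connectedComponentMk v = c} :=
  Equiv.ofBijective
    (fun v => ⟨H.connectedComponentMk v, by
      rintro ⟨u, w, huw, hu⟩
      obtain rfl := v.2.eq_of_reachable (SimpleGraph.ConnectedComponent.exact hu).symm
      exact v.2 w huw⟩)
    ⟨fun v w h => Subtype.ext
        (v.2.eq_of_reachable (SimpleGraph.ConnectedComponent.exact (congrArg Subtype.val h))),
      fun ⟨c, hc⟩ => c.ind (fun v hv => ⟨⟨v, fun w hvw => hv ⟨v, w, hvw, rfl⟩⟩, rfl⟩) hc⟩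

theorem kG_eq_cG_add_card_isIsolated [Finite V] (H : SimpleGraph V) :
    kG H = cG H + Nat.card {v // H.IsIsolated v} := by
  have := Fintype.ofFinite V
  rw [kG, cG, Nat.card_congr H.isIsolatedEquivUncovered, Nat.card_eq_fintype_card,
    Nat.card_eq_fintype_card, Nat.card_eq_fintype_card, Fintype.card_subtype_compl]
  have hcovered_le := Fintype.card_subtype_le
    fun c : H.ConnectedComponent => ∃ v w, H.Adj v w ∧ H.connectedComponentMk v = c
  omega

section fromEdgeSet

variable [Fintype V] {A : Finset (Sym2 V)}

theorem isIsolated_fromEdgeSet_iff (hA : ∀ s ∈ A, ¬ s.IsDiag) {v : V} :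
    (SimpleGraph.fromEdgeSet (A : Set (Sym2 V))).IsIsolated v ↔ v ∉ vsupp A := by
  simp only [SimpleGraph.IsIsolated, SimpleGraph.fromEdgeSet_adj, vsupp, mem_filter, mem_univ,
    true_and, not_exists, not_and, mem_coe]
  refine ⟨fun h s hs hv => ?_, fun h w hvw _ => h _ hvw (Sym2.mem_mk_left v w)⟩
  rw [← Sym2.other_spec hv] at hs
  exact h _ hs (fun hdiag => hA _ hs (Sym2.mk_isDiag_iff.2 hdiag))

theorem cG_fromEdgeSet (hA : ∀ s ∈ A, ¬ s.IsDiag) :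
    cG (SimpleGraph.fromEdgeSet (A : Set (Sym2 V))) = nCompInduced A := by
  refine Nat.card_congr (Equiv.subtypeEquivRight fun c => exists_congr fun v => ?_)
  have hcovered := (isIsolated_fromEdgeSet_iff hA (v := v)).not_left
  simp only [SimpleGraph.IsIsolated, not_forall, not_not, vsupp, mem_filter, mem_univ,
    true_and] at hcovered
  rw [← hcovered, exists_and_right]

theorem kG_fromEdgeSet_add_card_vsupp (hA : ∀ s ∈ A, ¬ s.IsDiag) :
    kG (SimpleGraph.fromEdgeSet (A : Set (Sym2 V))) + #(vsupp A) =
      Fintype.card V + nCompInduced A := by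
  have hisolated : Nat.card {v // (SimpleGraph.fromEdgeSet (A : Set (Sym2 V))).IsIsolated v} =
      #(vsupp A)ᶜ := by
    rw [Nat.card_congr (Equiv.subtypeEquivRight fun v => isIsolated_fromEdgeSet_iff hA),
      Nat.card_eq_fintype_card, Fintype.card_subtype_compl, Fintype.card_coe, card_compl]
  rw [kG_eq_cG_add_card_isIsolated, cG_fromEdgeSet hA, hisolated, add_assoc,
    card_compl_add_card, add_comm]

end fromEdgeSet

theorem coeff3_X_pow_mul_X_pow_mul_X_pow (a b c i j k : ℕ) :
    coeff3 (X 0 ^ a * X 1 ^ b * X 2 ^ c) i j k = if a = i ∧ b = j ∧ c = k then 1 else 0 := by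
  simp only [coeff3, X_pow_eq_monomial, monomial_mul, coeff_monomial, mul_one]
  congr 1
  simp [Finsupp.ext_iff, Fin.forall_fin_succ]

theorem coeff3_ccp [Fintype V] (G : SimpleGraph V) (i j k : ℕ) :
    coeff3 (ccp G) i j k = #((edgeFinset' G).powerset.filter fun A : Finset (Sym2 V) =>
      kG (SimpleGraph.fromEdgeSet (A : Set (Sym2 V))) = i ∧ #A = j ∧
        cG (SimpleGraph.fromEdgeSet (A : Set (Sym2 V))) = k) := by
  rw [natCast_card_filter, ccp, coeff3, coeff_sum]
  exact sum_congr rfl fun A _ => coeff3_X_pow_mul_X_pow_mul_X_pow ..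

/-- Let `G` be a finite graph with `n(G)` vertices and let
`g(G,n',m',k')` be the number of edge subsets whose edge-induced subgraph has `n'`
vertices, `m'` edges and `k'` components.  Then
`g(G,n',m',k') = [x^{n(G)−n'+k'} y^{m'} z^{k'}]C(G)` (the exponent of `x` being the
natural number `i` with `i + n' = n(G) + k'`). -/
theorem ccp_edge_induced_count {V : Type} [Fintype V] (G : SimpleGraph V)
    (n' m' k' : ℕ) (i : ℕ) (hi : i + n' = Fintype.card V + k') :
    (((edgeFinset' G).powerset.filter (fun A =>
        (vsupp A).card = n' ∧ A.card = m' ∧ nCompInduced A = k')).card : ℤ) =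
      coeff3 (ccp G) i m' k' := by
  rw [coeff3_ccp]
  congr 2
  refine filter_congr fun A hAE => ?_
  have hA : ∀ s ∈ A, ¬ s.IsDiag := fun s hs =>
    G.not_isDiag_of_mem_edgeSet (by simpa [edgeFinset'] using mem_powerset.1 hAE hs)
  have hk := kG_fromEdgeSet_add_card_vsupp hA
  rw [cG_fromEdgeSet hA]
  have hn' := card_le_univ (vsupp A)
  constructor <;> rintro ⟨h₁, h₂, h₃⟩ <;> exact ⟨by omega, h₂, by omega⟩

end
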